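/- arXiv:1401.6783 — 2 statements merged into one kernel-verified Lean document; each statement's English description precedes it below -/
import Mathlib

section
/- For every z > 0, the function R(z) = √(2π) exp(−z) z^{z+1/2} / Γ(z+1) satisfies R(z) < 1, R is strictly increasing on (0,∞), and R(z) → 1 as z → ∞. -/
open Real Filter

noncomputable def stirlingR (z : ℝ) : ℝ :=
  Real.sqrt (2 * Real.pi) * Real.exp (-z) * z ^ (z + 1 / 2) / Real.Gamma (z + 1)

/-! Write `f = log R`, i.e. `f z = log √(2π) - z + (z + 1/2) log z - log Γ(z + 1)`. Its forward
difference `f (z + 1) - f z = (z + 1/2) log (1 + 1/z) - 1 = ∑_{k ≥ 1} t ^ (2k) / (2k + 1)`, with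
`t = 1 / (2z + 1)`, is strictly decreasing in `z`. Stirling's formula for `n!` gives `f n → 0`,
and log-convexity of `Γ` controls `f` between consecutive integers, so `f z → 0`. A function
tending to a limit whose forward difference strictly decreases is strictly increasing
(`f (y + n) - f (x + n)` decreases in `n` to `0`), hence stays below its limit: `f < 0`, so
`R = exp ∘ f < 1`. -/

open Set Topology fwdDiff

theorem StrictMonoOn.lt_of_tendsto_atTop {f : ℝ → ℝ} {c a : ℝ} (hf : StrictMonoOn f (Ioi c))
    (hlim : Tendsto f atTop (𝓝 a)) {z : ℝ} (hz : c < z) : f z < a := by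
  have hz1 : c < z + 1 := by linarith
  refine (hf hz hz1 (lt_add_one z)).trans_le (ge_of_tendsto hlim ?_)
  filter_upwards [eventually_ge_atTop (z + 1)] with w hw
  exact hf.monotoneOn hz1 (hz1.trans_le hw) hw

theorem strictMonoOn_Ioi_of_tendsto_of_strictAntiOn_fwdDiff {f : ℝ → ℝ} {c a : ℝ}
    (hlim : Tendsto f atTop (𝓝 a)) (hΔ : StrictAntiOn (Δ_[1] f) (Ioi c)) :
    StrictMonoOn f (Ioi c) := by
  intro x hx y hy hxy
  have hx' (n : ℕ) : x + n ∈ Ioi c := mem_Ioi.2 (lt_add_of_lt_of_nonneg hx n.cast_nonneg)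
  have hy' (n : ℕ) : y + n ∈ Ioi c := mem_Ioi.2 (lt_add_of_lt_of_nonneg hy n.cast_nonneg)
  have hgap : Antitone fun n : ℕ ↦ f (y + n) - f (x + n) := by
    refine antitone_nat_of_succ_le fun n ↦ ?_
    have := hΔ (hx' n) (hy' n) (by linarith)
    simp only [fwdDiff, Nat.cast_succ, ← add_assoc] at this ⊢
    linarith
  have hgap_lim : Tendsto (fun n : ℕ ↦ f (y + n) - f (x + n)) atTop (𝓝 0) := by
    have hshift (w : ℝ) : Tendsto (fun n : ℕ ↦ f (w + n)) atTop (𝓝 a) :=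
      hlim.comp (tendsto_atTop_add_const_left _ w tendsto_natCast_atTop_atTop)
    simpa using (hshift y).sub (hshift x)
  have h1 := hgap.le_of_tendsto hgap_lim 1
  have := hΔ hx hy hxy
  simp only [fwdDiff, Nat.cast_one] at h1 this
  linarith

theorem hasSum_mul_log_one_add_inv {a : ℝ} (ha : 0 < a) :
    HasSum (fun k : ℕ ↦ (1 / (2 * a + 1)) ^ (2 * k) / (2 * k + 1))
      ((a + 1 / 2) * log (1 + a⁻¹)) :=
  ((hasSum_log_one_add_inv ha).mul_left (a + 1 / 2)).congr_fun fun k ↦ by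
    rw [pow_succ]
    field_simp

theorem strictAntiOn_mul_log_one_add_inv :
    StrictAntiOn (fun a : ℝ ↦ (a + 1 / 2) * log (1 + a⁻¹)) (Ioi 0) := by
  intro a (ha : 0 < a) b (hb : 0 < b) hab
  have hba : 1 / (2 * b + 1) < 1 / (2 * a + 1) := by gcongr
  refine hasSum_lt (i := 1) (fun k ↦ ?_) ?_ (hasSum_mul_log_one_add_inv hb)
    (hasSum_mul_log_one_add_inv ha)
  · gcongr
  · simp only [Nat.cast_one, mul_one]
    gcongr

theorem log_add_sub_log_mem_Icc {a d : ℝ} (ha : 0 < a) (hd : 0 ≤ d) :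
    log (a + d) - log a ∈ Icc (d / (a + d)) (d / a) := by
  have had : 0 < a + d := by linarith
  rw [← log_div had.ne' ha.ne']
  refine ⟨Eq.trans_le ?_ (one_sub_inv_le_log_of_pos (div_pos had ha)),
    (log_le_sub_one_of_pos (div_pos had ha)).trans_eq ?_⟩ <;> field_simp <;> ring

theorem log_Gamma_natCast_add_one_add_sub_mem_Icc {n : ℕ} (hn : n ≠ 0) {x : ℝ} (hx0 : 0 ≤ x)
    (hx1 : x ≤ 1) :
    log (Gamma (n + 1 + x)) - log (Gamma (n + 1)) ∈ Icc (x * log n) (x * log (n + 1)) := by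
  rcases hx0.eq_or_lt with rfl | hx
  · simp
  have hfeq {y : ℝ} (hy : 0 < y) : (log ∘ Gamma) (y + 1) = (log ∘ Gamma) y + log y := by
    rw [Function.comp_apply, Function.comp_apply, Gamma_add_one hy.ne',
      log_mul hy.ne' (Gamma_pos_of_pos hy).ne', add_comm]
  have hle := BohrMollerup.f_add_nat_le convexOn_log_Gamma hfeq n.succ_ne_zero hx hx1
  have hge := BohrMollerup.f_add_nat_ge convexOn_log_Gamma hfeq (by omega : 2 ≤ n + 1) hx
  simp only [Function.comp_apply, Nat.cast_add_one, add_sub_cancel_right] at hle hge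
  constructor <;> linarith

noncomputable def logStirlingR (z : ℝ) : ℝ :=
  log √(2 * π) - z + (z + 1 / 2) * log z - log (Gamma (z + 1))

theorem exp_logStirlingR {z : ℝ} (hz : 0 < z) : exp (logStirlingR z) = stirlingR z := by
  have hΓ : 0 < Gamma (z + 1) := Gamma_pos_of_pos (by linarith)
  rw [logStirlingR, stirlingR, exp_sub, exp_add, exp_sub, exp_log (by positivity), exp_log hΓ,
    mul_comm, ← log_rpow hz, exp_log (by positivity), exp_neg]
  field_simp

theorem fwdDiff_logStirlingR {z : ℝ} (hz : 0 < z) :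
    Δ_[1] logStirlingR z = (z + 1 / 2) * log (1 + z⁻¹) - 1 := by
  have hΓ : 0 < Gamma (z + 1) := Gamma_pos_of_pos (by linarith)
  have hz1 : 1 + z⁻¹ = (z + 1) / z := by field_simp
  rw [fwdDiff, logStirlingR, logStirlingR, Gamma_add_one (by positivity),
    log_mul (by positivity) hΓ.ne', hz1, log_div (by positivity) hz.ne']
  ring

theorem strictAntiOn_fwdDiff_logStirlingR : StrictAntiOn (Δ_[1] logStirlingR) (Ioi 0) := by
  intro x hx y hy hxy
  rw [fwdDiff_logStirlingR hx, fwdDiff_logStirlingR hy]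
  linarith [strictAntiOn_mul_log_one_add_inv hx hy hxy]

theorem logStirlingR_natCast {n : ℕ} (hn : n ≠ 0) :
    logStirlingR n = log √π - log (Stirling.stirlingSeq n) := by
  have hn' : (0 : ℝ) < n := by positivity
  rw [logStirlingR, Stirling.log_stirlingSeq_formula, Gamma_nat_eq_factorial,
    log_sqrt (by positivity), log_sqrt pi_pos.le, log_mul two_ne_zero hn'.ne',
    log_mul two_ne_zero pi_pos.ne', log_div hn'.ne' (exp_ne_zero 1), log_exp]
  ring

theorem tendsto_logStirlingR_natCast :
    Tendsto (fun n : ℕ ↦ logStirlingR n) atTop (𝓝 0) := by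
  have hπ : √π ≠ 0 := (sqrt_pos.2 pi_pos).ne'
  have hlog := (continuousAt_log hπ).tendsto.comp Stirling.tendsto_stirlingSeq_sqrt_pi
  rw [← sub_self (log √π)]
  refine (tendsto_const_nhds.sub hlog).congr' ?_
  filter_upwards [eventually_ne_atTop 0] with n hn
  exact (logStirlingR_natCast hn).symm

theorem abs_logStirlingR_natCast_add_sub_le {n : ℕ} (hn : n ≠ 0) {x : ℝ} (hx0 : 0 ≤ x)
    (hx1 : x ≤ 1) : |logStirlingR (n + x) - logStirlingR n| ≤ 2 / n := by
  have hn' : (0 : ℝ) < n := by positivity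
  have hdiff : logStirlingR (n + x) - logStirlingR n = (n + x + 1 / 2) * (log (n + x) - log n)
      + x * log n - x - (log (Gamma (n + 1 + x)) - log (Gamma (n + 1))) := by
    rw [logStirlingR, logStirlingR, add_right_comm (n : ℝ) x 1]
    ring
  obtain ⟨hD_lo, hD_hi⟩ := log_Gamma_natCast_add_one_add_sub_mem_Icc hn hx0 hx1
  obtain ⟨hu_lo, hu_hi⟩ := log_add_sub_log_mem_Icc hn' hx0
  obtain ⟨hlog_succ_lo, hlog_succ_hi⟩ := log_add_sub_log_mem_Icc hn' zero_le_one
  set u := log (n + x) - log n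
  have hu_nonneg : 0 ≤ u := (div_nonneg hx0 (by positivity)).trans hu_lo
  rw [abs_le, hdiff]
  constructor
  · have hxu : x ≤ (n + x) * u := by rwa [div_le_iff₀' (by positivity)] at hu_lo
    have : x * (log (n + 1) - log n) ≤ 1 * (1 / n) :=
      mul_le_mul hx1 hlog_succ_hi ((div_nonneg zero_le_one (by positivity)).trans hlog_succ_lo)
        zero_le_one
    have : 1 / (n : ℝ) ≤ 2 / n := by gcongr; norm_num
    linarith
  · have : (n + x + 1 / 2) * u ≤ x + 3 / 2 / n :=
      calc (n + x + 1 / 2) * u ≤ (n + x + 1 / 2) * (x / n) := by gcongr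
        _ = x + x * (x + 1 / 2) / n := by field_simp; ring
        _ ≤ x + 1 * (1 + 1 / 2) / n := by gcongr
        _ = x + 3 / 2 / n := by ring
    have : 3 / 2 / (n : ℝ) ≤ 2 / n := by gcongr; norm_num
    linarith

theorem tendsto_logStirlingR : Tendsto logStirlingR atTop (𝓝 0) := by
  have hfloor : Tendsto (fun z : ℝ ↦ ⌊z⌋₊) atTop atTop := tendsto_nat_floor_atTop
  have hbound : Tendsto (fun z : ℝ ↦ 2 / (⌊z⌋₊ : ℝ)) atTop (𝓝 0) :=
    tendsto_const_nhds.div_atTop (tendsto_natCast_atTop_atTop.comp hfloor)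
  have hgap : Tendsto (fun z ↦ logStirlingR z - logStirlingR ⌊z⌋₊) atTop (𝓝 0) := by
    refine squeeze_zero_norm' ?_ hbound
    filter_upwards [eventually_ge_atTop 1] with z hz
    have hfloor_le : (⌊z⌋₊ : ℝ) ≤ z := Nat.floor_le (by linarith)
    have := abs_logStirlingR_natCast_add_sub_le (Nat.floor_pos.2 hz).ne'
      (sub_nonneg.2 hfloor_le) (by linarith [Nat.lt_floor_add_one z])
    rwa [add_sub_cancel] at this
  simpa using hgap.add (tendsto_logStirlingR_natCast.comp hfloor)

theorem stirlingR_lt_one_strictMono_tendsto :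
    (∀ z > (0 : ℝ), stirlingR z < 1) ∧
    StrictMonoOn stirlingR (Set.Ioi (0 : ℝ)) ∧
    Tendsto stirlingR atTop (nhds 1) := by
  have hmono : StrictMonoOn logStirlingR (Ioi 0) :=
    strictMonoOn_Ioi_of_tendsto_of_strictAntiOn_fwdDiff tendsto_logStirlingR
      strictAntiOn_fwdDiff_logStirlingR
  refine ⟨fun z hz ↦ ?_, (exp_strictMono.comp_strictMonoOn hmono).congr
    fun z hz ↦ exp_logStirlingR hz, ?_⟩
  · rw [← exp_logStirlingR hz, ← exp_zero]
    exact exp_lt_exp.2 (hmono.lt_of_tendsto_atTop tendsto_logStirlingR hz)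
  · rw [← exp_zero]
    refine ((continuous_exp.tendsto 0).comp tendsto_logStirlingR).congr' ?_
    filter_upwards [eventually_gt_atTop 0] with z hz using exp_logStirlingR hz
end

section
/- Let ξ_b be a Gamma random variable with shape x/b and scale b for fixed x > 0, and f : (0,∞) → ℝ a C² function with bounded second derivative. Then E[f(ξ_b)] = f(x) + (xb/2) f''(x) + o(b) as b → 0⁺. -/
/-!
Expand `f` to second order at `x`. The quadratic Taylor polynomial integrates exactly against
the Gamma density, whose mean is `x` and variance `x b`, giving `f x + (x b / 2) f'' x`. For every
`ε > 0` the remainder is at most `ε (t - x)² + C_ε (t - x)⁴` (continuity of `f''` near `x`,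
boundedness of `f''` far from it), and the central moments `x b` and `3 x² b² + 6 x b³` bound its
integral by `ε x b + O(b²)`.
-/

open MeasureTheory Real Filter Asymptotics

noncomputable def gammaKernel (ρ b t : ℝ) : ℝ :=
  t ^ (ρ - 1) * Real.exp (-t / b) / (b ^ ρ * Real.Gamma ρ)

open Set

lemma Real.Gamma_add_nat_eq_mul_prod {s : ℝ} (hs : 0 < s) (n : ℕ) :
    Gamma (s + n) = Gamma s * ∏ i ∈ Finset.range n, (s + i) := by
  induction n with
  | zero => simp
  | succ n ih =>
    rw [Nat.cast_succ, ← add_assoc, Gamma_add_one (by positivity), ih, Finset.prod_range_succ]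
    ring

lemma integrableOn_rpow_mul_exp_neg_div {s b : ℝ} (hs : 0 < s) (hb : 0 < b) :
    IntegrableOn (fun t : ℝ => t ^ (s - 1) * exp (-t / b)) (Ioi 0) := by
  refine (integrableOn_rpow_mul_exp_neg_mul_rpow (s := s - 1) (p := 1) (by linarith) one_pos
    (inv_pos.2 hb)).congr_fun (fun t _ => ?_) measurableSet_Ioi
  simp only [rpow_one, div_eq_inv_mul, neg_mul, mul_neg]

lemma integral_rpow_mul_exp_neg_div {s b : ℝ} (hs : 0 < s) (hb : 0 < b) :
    ∫ t in Ioi (0 : ℝ), t ^ (s - 1) * exp (-t / b) = b ^ s * Gamma s := by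
  simpa [neg_div, div_eq_inv_mul] using integral_rpow_mul_exp_neg_mul_Ioi hs (inv_pos.2 hb)

section GammaKernel

variable {ρ b : ℝ}

lemma gammaKernel_nonneg (hρ : 0 ≤ ρ) (hb : 0 ≤ b) {t : ℝ} (ht : 0 ≤ t) :
    0 ≤ gammaKernel ρ b t := by
  unfold gammaKernel
  positivity

lemma measurable_gammaKernel : Measurable (gammaKernel ρ b) := by
  unfold gammaKernel
  fun_prop

lemma pow_mul_gammaKernel (m : ℕ) {t : ℝ} (ht : 0 < t) :
    t ^ m * gammaKernel ρ b t = (b ^ ρ * Gamma ρ)⁻¹ * (t ^ (ρ + m - 1) * exp (-t / b)) := by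
  rw [gammaKernel, add_sub_right_comm, rpow_add ht, rpow_natCast]
  ring

lemma integrableOn_pow_mul_gammaKernel (hρ : 0 < ρ) (hb : 0 < b) (m : ℕ) :
    IntegrableOn (fun t : ℝ => t ^ m * gammaKernel ρ b t) (Ioi 0) :=
  IntegrableOn.congr_fun ((integrableOn_rpow_mul_exp_neg_div (by positivity) hb).const_mul _)
    (fun _ ht => (pow_mul_gammaKernel m ht).symm) measurableSet_Ioi

lemma integral_pow_mul_gammaKernel (hρ : 0 < ρ) (hb : 0 < b) (m : ℕ) :
    ∫ t in Ioi (0 : ℝ), t ^ m * gammaKernel ρ b t = b ^ m * (Gamma (ρ + m) / Gamma ρ) := by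
  rw [setIntegral_congr_fun measurableSet_Ioi fun _ ht => pow_mul_gammaKernel m ht,
    integral_const_mul, integral_rpow_mul_exp_neg_div (by positivity) hb, rpow_add hb,
    rpow_natCast]
  have := (rpow_pos_of_pos hb ρ).ne'
  have := (Gamma_pos_of_pos hρ).ne'
  field_simp

lemma sub_pow_mul_gammaKernel (x t : ℝ) (n : ℕ) :
    (t - x) ^ n * gammaKernel ρ b t =
      ∑ m ∈ Finset.range (n + 1),
        (-x) ^ (n - m) * n.choose m * (t ^ m * gammaKernel ρ b t) := by
  rw [sub_eq_add_neg, add_pow, Finset.sum_mul]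
  exact Finset.sum_congr rfl fun _ _ => by ring

lemma integrableOn_sub_pow_mul_gammaKernel (hρ : 0 < ρ) (hb : 0 < b) (x : ℝ) (n : ℕ) :
    IntegrableOn (fun t : ℝ => (t - x) ^ n * gammaKernel ρ b t) (Ioi 0) := by
  simp_rw [sub_pow_mul_gammaKernel]
  exact integrable_finsetSum _ fun m _ => (integrableOn_pow_mul_gammaKernel hρ hb m).const_mul _

end GammaKernel

section ShapeOverScale

variable {x b : ℝ}

lemma integral_pow_mul_gammaKernel_div (hx : 0 < x) (hb : 0 < b) (m : ℕ) :
    ∫ t in Ioi (0 : ℝ), t ^ m * gammaKernel (x / b) b t =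
      ∏ i ∈ Finset.range m, (x + i * b) := by
  have hρ : 0 < x / b := by positivity
  rw [integral_pow_mul_gammaKernel hρ hb, Gamma_add_nat_eq_mul_prod hρ,
    mul_div_cancel_left₀ _ (Gamma_pos_of_pos hρ).ne',
    show b ^ m = ∏ _i ∈ Finset.range m, b by simp, ← Finset.prod_mul_distrib]
  refine Finset.prod_congr rfl fun _ _ => ?_
  field_simp

lemma integral_sub_pow_mul_gammaKernel_div (hx : 0 < x) (hb : 0 < b) (n : ℕ) :
    ∫ t in Ioi (0 : ℝ), (t - x) ^ n * gammaKernel (x / b) b t =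
      ∑ m ∈ Finset.range (n + 1),
        (-x) ^ (n - m) * n.choose m * ∏ i ∈ Finset.range m, (x + i * b) := by
  simp_rw [sub_pow_mul_gammaKernel]
  rw [integral_finsetSum _ fun m _ =>
    (integrableOn_pow_mul_gammaKernel (by positivity) hb m).const_mul _]
  simp_rw [integral_const_mul, integral_pow_mul_gammaKernel_div hx hb]

lemma integral_gammaKernel_div (hx : 0 < x) (hb : 0 < b) :
    ∫ t in Ioi (0 : ℝ), gammaKernel (x / b) b t = 1 := by
  simpa using integral_sub_pow_mul_gammaKernel_div hx hb 0

lemma integral_sub_mul_gammaKernel_div (hx : 0 < x) (hb : 0 < b) :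
    ∫ t in Ioi (0 : ℝ), (t - x) * gammaKernel (x / b) b t = 0 := by
  simpa [Finset.sum_range_succ] using integral_sub_pow_mul_gammaKernel_div hx hb 1

lemma integral_sub_sq_mul_gammaKernel_div (hx : 0 < x) (hb : 0 < b) :
    ∫ t in Ioi (0 : ℝ), (t - x) ^ 2 * gammaKernel (x / b) b t = x * b := by
  rw [integral_sub_pow_mul_gammaKernel_div hx hb]
  simp [Finset.sum_range_succ, Finset.prod_range_succ]
  ring

lemma integral_sub_pow_four_mul_gammaKernel_div (hx : 0 < x) (hb : 0 < b) :
    ∫ t in Ioi (0 : ℝ), (t - x) ^ 4 * gammaKernel (x / b) b t =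
      3 * x ^ 2 * b ^ 2 + 6 * x * b ^ 3 := by
  rw [integral_sub_pow_mul_gammaKernel_div hx hb]
  simp [Finset.sum_range_succ, Finset.prod_range_succ, Nat.choose]
  ring

end ShapeOverScale

lemma abs_sub_sub_mul_le_mul_sq {g g' g'' : ℝ → ℝ} {x t C : ℝ}
    (hg : ∀ u ∈ uIcc x t, HasDerivAt g (g' u) u)
    (hg' : ∀ u ∈ uIcc x t, HasDerivAt g' (g'' u) u)
    (hC : ∀ u ∈ uIcc x t, |g'' u| ≤ C) :
    |g t - g x - g' x * (t - x)| ≤ C * (t - x) ^ 2 := by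
  have hC0 : 0 ≤ C := (abs_nonneg _).trans (hC x left_mem_uIcc)
  have hslope : ∀ s ∈ uIcc x t, ‖g' s - g' x‖ ≤ C * |t - x| := fun s hs =>
    calc ‖g' s - g' x‖ ≤ C * ‖s - x‖ :=
          (convex_uIcc x t).norm_image_sub_le_of_norm_hasDerivWithin_le
            (fun u hu => (hg' u hu).hasDerivWithinAt) hC left_mem_uIcc hs
      _ ≤ C * |t - x| := mul_le_mul_of_nonneg_left (abs_sub_left_of_mem_uIcc hs) hC0
  have hlin := (convex_uIcc x t).norm_image_sub_le_of_norm_hasDerivWithin_le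
    (f := fun u => g u - g' x * u)
    (fun u hu => (((hg u hu).sub ((hasDerivAt_id u).const_mul (g' x))).congr_deriv
      (by rw [mul_one])).hasDerivWithinAt)
    hslope left_mem_uIcc right_mem_uIcc
  calc |g t - g x - g' x * (t - x)| = ‖(g t - g' x * t) - (g x - g' x * x)‖ := by
        rw [norm_eq_abs]; ring_nf
    _ ≤ C * |t - x| * |t - x| := hlin
    _ = C * (t - x) ^ 2 := by rw [mul_assoc, abs_mul_abs_self, sq]

lemma abs_sub_taylor_two_le {f : ℝ → ℝ} (hf : ContDiff ℝ 2 f) {x t C : ℝ}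
    (hC : ∀ u ∈ uIcc x t, |iteratedDeriv 2 f u - iteratedDeriv 2 f x| ≤ C) :
    |f t - (f x + deriv f x * (t - x) + iteratedDeriv 2 f x / 2 * (t - x) ^ 2)|
      ≤ C * (t - x) ^ 2 := by
  set A := iteratedDeriv 2 f x
  have hf' (u : ℝ) : HasDerivAt f (deriv f u) u :=
    (hf.differentiable (by norm_num) u).hasDerivAt
  have hdf : Differentiable ℝ (deriv f) := by
    simpa only [iteratedDeriv_one] using hf.differentiable_iteratedDeriv 1 (by norm_num)
  have hf'' (u : ℝ) : HasDerivAt (deriv f) (iteratedDeriv 2 f u) u := by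
    rw [iteratedDeriv_succ, iteratedDeriv_one]
    exact (hdf u).hasDerivAt
  have key := abs_sub_sub_mul_le_mul_sq (x := x) (t := t)
    (g := fun u => f u - A / 2 * (u - x) ^ 2) (g' := fun u => deriv f u - A * (u - x))
    (g'' := fun u => iteratedDeriv 2 f u - A)
    (fun u _ => ((hf' u).sub ((((hasDerivAt_id u).sub_const x).pow 2).const_mul (A / 2)))
      |>.congr_deriv (by simp only [id]; ring))
    (fun u _ => ((hf'' u).sub (((hasDerivAt_id u).sub_const x).const_mul A)).congr_deriv
      (by simp only [mul_one]))
    hC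
  convert key using 2
  ring

/-- Near `x` the remainder is `ε (t - x)²` by continuity of `f''`; far from `x`, i.e. for
`|t - x| ≥ δ`, the crude bound `2M (t - x)²` is absorbed into `(2M/δ²) (t - x)⁴`. -/
lemma exists_abs_sub_taylor_two_le {f : ℝ → ℝ} (hf : ContDiff ℝ 2 f) {M : ℝ}
    (hM : ∀ t, |iteratedDeriv 2 f t| ≤ M) (x : ℝ) {ε : ℝ} (hε : 0 < ε) :
    ∃ C, ∀ t, |f t - (f x + deriv f x * (t - x) + iteratedDeriv 2 f x / 2 * (t - x) ^ 2)|
      ≤ ε * (t - x) ^ 2 + C * (t - x) ^ 4 := by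
  obtain ⟨δ, hδ, hnear⟩ :=
    Metric.continuous_iff.1 (hf.continuous_iteratedDeriv 2 le_rfl) x ε hε
  refine ⟨2 * M / δ ^ 2, fun t => ?_⟩
  have hM0 : 0 ≤ M := (abs_nonneg _).trans (hM x)
  rcases lt_or_ge |t - x| δ with hclose | hfar
  · have h := abs_sub_taylor_two_le hf (C := ε) fun u hu =>
      (hnear u ((abs_sub_left_of_mem_uIcc hu).trans_lt hclose)).le
    have : 0 ≤ 2 * M / δ ^ 2 * (t - x) ^ 4 := by positivity
    linarith
  · have h := abs_sub_taylor_two_le hf (x := x) (t := t) (C := 2 * M) fun u _ =>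
      (abs_sub _ _).trans (by linarith [hM u, hM x])
    have hδt : δ ^ 2 ≤ (t - x) ^ 2 := by
      simpa only [sq_abs] using pow_le_pow_left₀ hδ.le hfar 2
    have : 2 * M * (t - x) ^ 2 ≤ 2 * M / δ ^ 2 * (t - x) ^ 4 := by
      rw [div_mul_eq_mul_div, le_div_iff₀ (by positivity)]
      nlinarith [mul_le_mul_of_nonneg_left hδt (by positivity : 0 ≤ 2 * M * (t - x) ^ 2)]
    nlinarith [sq_nonneg (t - x)]

lemma abs_integral_mul_gammaKernel_div_sub_le {f : ℝ → ℝ} (hf : Continuous f)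
    {x b d A ε C : ℝ} (hx : 0 < x) (hb : 0 < b)
    (hfP : ∀ t, |f t - (f x + d * (t - x) + A / 2 * (t - x) ^ 2)|
      ≤ ε * (t - x) ^ 2 + C * (t - x) ^ 4) :
    |(∫ t in Ioi (0 : ℝ), f t * gammaKernel (x / b) b t) - f x - x * b / 2 * A|
      ≤ ε * (x * b) + C * (3 * x ^ 2 * b ^ 2 + 6 * x * b ^ 3) := by
  set k := gammaKernel (x / b) b
  set P : ℝ → ℝ := fun t => f x + d * (t - x) + A / 2 * (t - x) ^ 2
  have hρ : 0 < x / b := by positivity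
  have hmom (n : ℕ) : IntegrableOn (fun t => (t - x) ^ n * k t) (Ioi 0) :=
    integrableOn_sub_pow_mul_gammaKernel hρ hb x n
  have hmom0 : IntegrableOn k (Ioi 0) := by simpa using hmom 0
  have hmom1 : IntegrableOn (fun t => (t - x) * k t) (Ioi 0) := by simpa using hmom 1
  have hPk_eq (t : ℝ) :
      P t * k t = f x * k t + d * ((t - x) * k t) + A / 2 * ((t - x) ^ 2 * k t) := by
    ring
  have hPk_int : IntegrableOn (fun t => P t * k t) (Ioi 0) := by
    simp only [hPk_eq]
    exact ((hmom0.const_mul _).fun_add (hmom1.const_mul _)).fun_add ((hmom 2).const_mul _)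
  have hPk : ∫ t in Ioi (0 : ℝ), P t * k t = f x + x * b / 2 * A := by
    simp only [hPk_eq]
    rw [integral_add ((hmom0.const_mul _).fun_add (hmom1.const_mul _)) ((hmom 2).const_mul _),
      integral_add (hmom0.const_mul _) (hmom1.const_mul _), integral_const_mul,
      integral_const_mul, integral_const_mul, integral_gammaKernel_div hx hb,
      integral_sub_mul_gammaKernel_div hx hb, integral_sub_sq_mul_gammaKernel_div hx hb]
    ring
  have hbound_int : IntegrableOn (fun t => (ε * (t - x) ^ 2 + C * (t - x) ^ 4) * k t) (Ioi 0) := by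
    simp only [add_mul, mul_assoc]
    exact ((hmom 2).const_mul ε).fun_add ((hmom 4).const_mul C)
  have hbound : ∫ t in Ioi (0 : ℝ), (ε * (t - x) ^ 2 + C * (t - x) ^ 4) * k t
      = ε * (x * b) + C * (3 * x ^ 2 * b ^ 2 + 6 * x * b ^ 3) := by
    simp only [add_mul, mul_assoc]
    rw [integral_add ((hmom 2).const_mul ε) ((hmom 4).const_mul C), integral_const_mul,
      integral_const_mul, integral_sub_sq_mul_gammaKernel_div hx hb,
      integral_sub_pow_four_mul_gammaKernel_div hx hb]
    ring
  have hdom : ∀ᵐ t ∂volume.restrict (Ioi 0),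
      ‖(f t - P t) * k t‖ ≤ (ε * (t - x) ^ 2 + C * (t - x) ^ 4) * k t := by
    refine (ae_restrict_iff' measurableSet_Ioi).2 (Eventually.of_forall fun t ht => ?_)
    have hk := gammaKernel_nonneg hρ.le hb.le (le_of_lt ht)
    rw [norm_mul, norm_of_nonneg hk, norm_eq_abs]
    exact mul_le_mul_of_nonneg_right (hfP t) hk
  have hrem_int : IntegrableOn (fun t => (f t - P t) * k t) (Ioi 0) :=
    hbound_int.mono' ((hf.sub (by fun_prop)).aestronglyMeasurable.mul
      measurable_gammaKernel.aestronglyMeasurable) hdom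
  have hsplit : ∫ t in Ioi (0 : ℝ), f t * k t
      = (∫ t in Ioi (0 : ℝ), P t * k t) + ∫ t in Ioi (0 : ℝ), (f t - P t) * k t := by
    rw [← integral_add hPk_int hrem_int]
    congr 1 with t
    ring
  rw [hsplit, hPk, ← hbound]
  calc |(f x + x * b / 2 * A + ∫ t in Ioi (0 : ℝ), (f t - P t) * k t) - f x - x * b / 2 * A|
      = ‖∫ t in Ioi (0 : ℝ), (f t - P t) * k t‖ := by rw [norm_eq_abs]; ring_nf
    _ ≤ _ := norm_integral_le_of_norm_le hbound_int hdom

/-- For `ξ_b ∼ Gamma(x/b, b)`, `E[f(ξ_b)] = f(x) + (xb/2) f''(x) + o(b)` as `b → 0⁺`. -/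
theorem gamma_expectation_expansion (x : ℝ) (hx : 0 < x) (f : ℝ → ℝ)
    (hf : ContDiff ℝ 2 f)
    (hbdd : ∃ M : ℝ, ∀ t : ℝ, |iteratedDeriv 2 f t| ≤ M) :
    (fun b : ℝ =>
        (∫ t in Set.Ioi (0 : ℝ), f t * gammaKernel (x / b) b t) -
          f x - x * b / 2 * iteratedDeriv 2 f x)
      =o[nhdsWithin 0 (Set.Ioi 0)] fun b => b := by
  obtain ⟨M, hM⟩ := hbdd
  refine isLittleO_iff.2 fun c hc => ?_
  obtain ⟨C, hC⟩ := exists_abs_sub_taylor_two_le hf hM x (ε := c / (2 * x)) (by positivity)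
  have hquartic : Tendsto (fun b => C * (3 * x ^ 2 * b + 6 * x * b ^ 2)) (nhdsWithin 0 (Ioi 0))
      (nhds 0) := by
    have hcont : Continuous fun b : ℝ => C * (3 * x ^ 2 * b + 6 * x * b ^ 2) := by fun_prop
    simpa using (hcont.tendsto 0).mono_left nhdsWithin_le_nhds
  filter_upwards [hquartic.eventually (eventually_le_nhds (half_pos hc)), self_mem_nhdsWithin]
    with b hsmall (hb : 0 < b)
  calc _ ≤ c / (2 * x) * (x * b) + C * (3 * x ^ 2 * b ^ 2 + 6 * x * b ^ 3) :=
        abs_integral_mul_gammaKernel_div_sub_le hf.continuous hx hb hC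
    _ = c / 2 * b + C * (3 * x ^ 2 * b + 6 * x * b ^ 2) * b := by field_simp
    _ ≤ c / 2 * b + c / 2 * b := by gcongr
    _ = c * ‖b‖ := by rw [norm_of_nonneg hb.le]; ring
end
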